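/- Let U, V ∈ U(n−1), τ, σ ∈ ℂ^{n−1}, t, s ∈ ℝ, and suppose Uτ = τ and Vσ = σ (so that R_U T_{(τ,t)} = T_{(τ,t)} R_U and R_V T_{(σ,s)} = T_{(σ,s)} R_V are Jordan-type factorizations). Then R_U T_{(τ,t)} and R_V T_{(σ,s)} commute if and only if UV = VU, Vτ = τ, Uσ = σ, and Im(τᴴσ) = 0. -/

import Mathlib

open Matrix Complex

/-- Index type for block matrices with blocks of sizes `1, m, 1` (so `m = n - 1`
and the total size is `n + 1`). -/
abbrev Idx (m : ℕ) : Type := Unit ⊕ (Fin m ⊕ Unit)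

/-- The Heisenberg rotation `R_U = diag(1, U, 1)`. -/
noncomputable def RU {m : ℕ} (U : Matrix (Fin m) (Fin m) ℂ) : Matrix (Idx m) (Idx m) ℂ :=
  Matrix.of fun i j =>
    match i, j with
    | Sum.inl _, Sum.inl _ => 1
    | Sum.inr (Sum.inl k), Sum.inr (Sum.inl l) => U k l
    | Sum.inr (Sum.inr _), Sum.inr (Sum.inr _) => 1
    | _, _ => 0

/-- The Heisenberg translation
`T_{(τ,t)} = [[1, −τᴴ, (−|τ|²+it)/2], [0, I, τ], [0, 0, 1]]`. -/
noncomputable def Htr {m : ℕ} (τ : Fin m → ℂ) (t : ℝ) : Matrix (Idx m) (Idx m) ℂ :=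
  Matrix.of fun i j =>
    match i, j with
    | Sum.inl _, Sum.inl _ => 1
    | Sum.inl _, Sum.inr (Sum.inl l) => -((starRingEnd ℂ) (τ l))
    | Sum.inl _, Sum.inr (Sum.inr _) =>
        (-(((∑ k, Complex.normSq (τ k) : ℝ)) : ℂ) + (t : ℂ) * Complex.I) / 2
    | Sum.inr (Sum.inl k), Sum.inr (Sum.inl l) => if k = l then 1 else 0
    | Sum.inr (Sum.inl k), Sum.inr (Sum.inr _) => τ k
    | Sum.inr (Sum.inr _), Sum.inr (Sum.inr _) => 1
    | _, _ => 0

/-- The Heisenberg dilation `D_r = diag(r, I, 1/r)`. -/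
noncomputable def Dil {m : ℕ} (r : ℝ) : Matrix (Idx m) (Idx m) ℂ :=
  Matrix.of fun i j =>
    match i, j with
    | Sum.inl _, Sum.inl _ => (r : ℂ)
    | Sum.inr (Sum.inl k), Sum.inr (Sum.inl l) => if k = l then 1 else 0
    | Sum.inr (Sum.inr _), Sum.inr (Sum.inr _) => ((r : ℂ))⁻¹
    | _, _ => 0

/-- The block diagonal matrix `diag(μ, A, λ)`. -/
noncomputable def diagM {m : ℕ} (μ : ℂ) (A : Matrix (Fin m) (Fin m) ℂ) (lam : ℂ) :
    Matrix (Idx m) (Idx m) ℂ :=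
  Matrix.of fun i j =>
    match i, j with
    | Sum.inl _, Sum.inl _ => μ
    | Sum.inr (Sum.inl k), Sum.inr (Sum.inl l) => A k l
    | Sum.inr (Sum.inr _), Sum.inr (Sum.inr _) => lam
    | _, _ => 0

/-- The matrix `J = [[0,0,1],[0,I,0],[1,0,0]]` of the second Hermitian form. -/
noncomputable def Jm (m : ℕ) : Matrix (Idx m) (Idx m) ℂ :=
  Matrix.of fun i j =>
    match i, j with
    | Sum.inl _, Sum.inr (Sum.inr _) => 1
    | Sum.inr (Sum.inr _), Sum.inl _ => 1
    | Sum.inr (Sum.inl k), Sum.inr (Sum.inl l) => if k = l then 1 else 0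
    | _, _ => 0

/-- The second Hermitian form `⟨z,w⟩ = wᴴ J z` of signature `(n,1)`. -/
noncomputable def hermJ {m : ℕ} (z w : Idx m → ℂ) : ℂ :=
  dotProduct (star w) ((Jm m).mulVec z)

/-- Membership in `U(n,1)` for the second Hermitian form: `g ∈ GL` and `gᴴ J g = J`. -/
def InU2 {m : ℕ} (g : Matrix (Idx m) (Idx m) ℂ) : Prop :=
  IsUnit g ∧ gᴴ * Jm m * g = Jm m

/-- The vector `e₁ = (1,0,…,0)ᵗ` (representing the boundary point `∞`). -/
noncomputable def e1 (m : ℕ) : Idx m → ℂ := fun i =>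
  match i with
  | Sum.inl _ => 1
  | _ => 0

/-- The vector `e_{n+1} = (0,…,0,1)ᵗ` (representing the boundary point `o`). -/
noncomputable def elast (m : ℕ) : Idx m → ℂ := fun i =>
  match i with
  | Sum.inr (Sum.inr _) => 1
  | _ => 0

/-- `dotc x y = xᴴ y = ∑ conj(xₖ) yₖ`. -/
noncomputable def dotc {m : ℕ} (x y : Fin m → ℂ) : ℂ :=
  ∑ k, (starRingEnd ℂ) (x k) * y k

/-- A matrix is diagonalizable if it is conjugate (in `GL`) to a diagonal matrix. -/
def IsDiagonalizable {N : Type*} [Fintype N] [DecidableEq N] (A : Matrix N N ℂ) : Prop :=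
  ∃ P : Matrix N N ℂ, IsUnit P.det ∧ (P⁻¹ * A * P).IsDiag

/-!
Both factors are block upper triangular matrices `[[1, −αᴴ, c], [0, U, β], [0, 0, 1]]`, a family
closed under multiplication, so the two products agree iff `UV = VU`, `Uσ + τ = Vτ + σ`,
`Vᴴτ + σ = Uᴴσ + τ` and `⟨τ, σ⟩ = ⟨σ, τ⟩`. The last condition says `Im ⟨τ, σ⟩ = 0`. For the
second, put `w = Vτ − τ = Uσ − σ`: since `Uᴴτ = τ`, `⟨τ, w⟩ = ⟨τ, Uσ⟩ − ⟨τ, σ⟩ = 0`, hence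
`⟨τ, Vτ⟩ = ⟨τ, τ⟩`, and for unitary `V` this gives `‖Vτ − τ‖² = 0`. So `Vτ = τ`, then `Uσ = σ`.
-/

section UnitaryFixedVectors

variable {R n : Type*} [CommRing R] [StarRing R] [Fintype n] [DecidableEq n]

theorem conjTranspose_mulVec_eq_self_of_mulVec_eq_self {U : Matrix n n R}
    (hU : U ∈ unitaryGroup n R) {x : n → R} (h : U *ᵥ x = x) : Uᴴ *ᵥ x = x := by
  conv_lhs => rw [← h]
  rw [mulVec_mulVec, ← star_eq_conjTranspose, (mem_unitaryGroup_iff' (A := U)).1 hU, one_mulVec]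

theorem star_mulVec_dotProduct_mulVec {U : Matrix n n R} (hU : U ∈ unitaryGroup n R)
    (x y : n → R) : star (U *ᵥ x) ⬝ᵥ (U *ᵥ y) = star x ⬝ᵥ y := by
  rw [star_mulVec, dotProduct_mulVec, vecMul_vecMul, ← star_eq_conjTranspose,
    (mem_unitaryGroup_iff' (A := U)).1 hU, vecMul_one]

variable [PartialOrder R] [StarOrderedRing R] [NoZeroDivisors R]

theorem mulVec_eq_self_of_star_dotProduct_mulVec_eq {U : Matrix n n R}
    (hU : U ∈ unitaryGroup n R) {x : n → R} (h : star x ⬝ᵥ (U *ᵥ x) = star x ⬝ᵥ x) :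
    U *ᵥ x = x := by
  have h' : star (U *ᵥ x) ⬝ᵥ x = star x ⬝ᵥ x := by
    rw [star_dotProduct, h, ← star_dotProduct]
  rw [← sub_eq_zero, ← dotProduct_star_self_eq_zero]
  simp only [star_sub, sub_dotProduct, dotProduct_sub, star_mulVec_dotProduct_mulVec hU, h, h']
  abel

theorem mulVec_eq_self_of_sub_eq {U V : Matrix n n R} (hU : U ∈ unitaryGroup n R)
    (hV : V ∈ unitaryGroup n R) {x y : n → R} (hUx : U *ᵥ x = x)
    (h : V *ᵥ x - x = U *ᵥ y - y) : V *ᵥ x = x := by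
  refine mulVec_eq_self_of_star_dotProduct_mulVec_eq hV ?_
  have hxUy : star x ⬝ᵥ (U *ᵥ y) = star x ⬝ᵥ y := by
    rw [dotProduct_mulVec, ← star_star (star x ᵥ* U), star_vecMul, star_star,
      conjTranspose_mulVec_eq_self_of_mulVec_eq_self hU hUx]
  rw [← sub_eq_zero, ← dotProduct_sub, h, dotProduct_sub, hxUy, sub_self]

end UnitaryFixedVectors

noncomputable def blockUpper {m : ℕ} (U : Matrix (Fin m) (Fin m) ℂ) (α β : Fin m → ℂ) (c : ℂ) :
    Matrix (Idx m) (Idx m) ℂ :=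
  Matrix.of fun i j =>
    match i, j with
    | Sum.inl _, Sum.inl _ => 1
    | Sum.inl _, Sum.inr (Sum.inl l) => -star (α l)
    | Sum.inl _, Sum.inr (Sum.inr _) => c
    | Sum.inr (Sum.inl k), Sum.inr (Sum.inl l) => U k l
    | Sum.inr (Sum.inl k), Sum.inr (Sum.inr _) => β k
    | Sum.inr (Sum.inr _), Sum.inr (Sum.inr _) => 1
    | _, _ => 0

theorem RU_mul_Htr_eq_blockUpper {m : ℕ} (U : Matrix (Fin m) (Fin m) ℂ) (τ : Fin m → ℂ) (t : ℝ) :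
    RU U * Htr τ t = blockUpper U τ (U *ᵥ τ)
      ((-(((∑ k, Complex.normSq (τ k) : ℝ)) : ℂ) + (t : ℂ) * Complex.I) / 2) := by
  ext (_ | k | _) (_ | l | _) <;>
    simp [mul_apply, RU, Htr, blockUpper, mulVec, dotProduct, Fintype.sum_sum_type, mul_ite]

theorem blockUpper_mul {m : ℕ} (U V : Matrix (Fin m) (Fin m) ℂ) (α β α' β' : Fin m → ℂ)
    (c c' : ℂ) :
    blockUpper U α β c * blockUpper V α' β' c' =
      blockUpper (U * V) (Vᴴ *ᵥ α + α') (U *ᵥ β' + β) (c + c' - star α ⬝ᵥ β') := by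
  ext (_ | k | _) (_ | l | _) <;>
    simp [mul_apply, blockUpper, mulVec, dotProduct, Fintype.sum_sum_type, conjTranspose_apply,
      mul_comm]
  ring

theorem blockUpper_inj {m : ℕ} {U V : Matrix (Fin m) (Fin m) ℂ} {α β α' β' : Fin m → ℂ}
    {c c' : ℂ} :
    blockUpper U α β c = blockUpper V α' β' c' ↔ U = V ∧ α = α' ∧ β = β' ∧ c = c' := by
  refine ⟨fun h => ⟨?_, ?_, ?_, ?_⟩, by rintro ⟨rfl, rfl, rfl, rfl⟩; rfl⟩
  · ext k l
    simpa [blockUpper] using congrFun₂ h (.inr (.inl k)) (.inr (.inl l))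
  · funext l
    exact (starRingEnd ℂ).injective <| by
      simpa [blockUpper] using congrFun₂ h (.inl ()) (.inr (.inl l))
  · funext k
    simpa [blockUpper] using congrFun₂ h (.inr (.inl k)) (.inr (.inr ()))
  · simpa [blockUpper] using congrFun₂ h (.inl ()) (.inr (.inr ()))

theorem star_dotProduct_comm_iff_im_dotc_eq_zero {m : ℕ} (x y : Fin m → ℂ) :
    star x ⬝ᵥ y = star y ⬝ᵥ x ↔ (dotc x y).im = 0 := by
  rw [star_dotProduct y x, eq_comm, ← Complex.conj_eq_iff_im]
  rfl

theorem screw_parabolics_commute_iff_general {m : ℕ}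
    (U V : Matrix (Fin m) (Fin m) ℂ)
    (hU : U ∈ Matrix.unitaryGroup (Fin m) ℂ) (hV : V ∈ Matrix.unitaryGroup (Fin m) ℂ)
    (τ σ : Fin m → ℂ) (t s : ℝ) (hUτ : U.mulVec τ = τ) (hVσ : V.mulVec σ = σ) :
    (RU U * Htr τ t) * (RU V * Htr σ s) = (RU V * Htr σ s) * (RU U * Htr τ t) ↔
      (U * V = V * U ∧ V.mulVec τ = τ ∧ U.mulVec σ = σ ∧ (dotc τ σ).im = 0) := by
  rw [RU_mul_Htr_eq_blockUpper, RU_mul_Htr_eq_blockUpper, hUτ, hVσ, blockUpper_mul,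
    blockUpper_mul, blockUpper_inj, ← star_dotProduct_comm_iff_im_dotc_eq_zero]
  constructor
  · rintro ⟨hUV, -, hτσ, hc⟩
    have hVτ : V *ᵥ τ = τ := open scoped ComplexOrder in
      mulVec_eq_self_of_sub_eq hU hV hUτ (sub_eq_sub_iff_add_eq_add.2 hτσ.symm)
    rw [hVτ, add_comm τ σ] at hτσ
    exact ⟨hUV, hVτ, add_right_cancel hτσ, by linear_combination -hc⟩
  · rintro ⟨hUV, hVτ, hUσ, hc⟩
    rw [conjTranspose_mulVec_eq_self_of_mulVec_eq_self hV hVτ,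
      conjTranspose_mulVec_eq_self_of_mulVec_eq_self hU hUσ, hUV, hVτ, hUσ, hc]
    exact ⟨rfl, add_comm _ _, add_comm _ _, by ring⟩

theorem screw_parabolics_commute_iff {m : ℕ} (hm : 1 ≤ m)
    (U V : Matrix (Fin m) (Fin m) ℂ)
    (hU : U ∈ Matrix.unitaryGroup (Fin m) ℂ) (hV : V ∈ Matrix.unitaryGroup (Fin m) ℂ)
    (τ σ : Fin m → ℂ) (t s : ℝ) (hUτ : U.mulVec τ = τ) (hVσ : V.mulVec σ = σ) :
    (RU U * Htr τ t) * (RU V * Htr σ s) = (RU V * Htr σ s) * (RU U * Htr τ t) ↔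
      (U * V = V * U ∧ V.mulVec τ = τ ∧ U.mulVec σ = σ ∧ (dotc τ σ).im = 0) :=
  screw_parabolics_commute_iff_general U V hU hV τ σ t s hUτ hVσ
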